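/- arXiv:1909.07424 — 7 statements merged into one kernel-verified Lean document; each statement's English description precedes it below -/
import Mathlib

section
/- The hypergraph product code is a CSS code: its stabilizer matrices satisfy H_X · H_Zᵗ = 0 over F₂; explicitly, (1_V ⊗ H | Hᵗ ⊗ 1_C) · (H ⊗ 1_V | 1_C ⊗ Hᵗ)ᵗ = 0. -/
open Matrix Kronecker

variable {V C : Type*} [Fintype V] [Fintype C] [DecidableEq V] [DecidableEq C]

/-- X-stabilizer matrix `H_X = (1_V ⊗ H | Hᵗ ⊗ 1_C)` of the hypergraph product of `H`
with itself. Rows are indexed by `V × C`, column blocks by `V × V` and `C × C`. -/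
def HX (H : Matrix C V (ZMod 2)) : Matrix (V × C) ((V × V) ⊕ (C × C)) (ZMod 2) :=
  Matrix.fromCols ((1 : Matrix V V (ZMod 2)) ⊗ₖ H) (Hᵀ ⊗ₖ (1 : Matrix C C (ZMod 2)))

/-- Z-stabilizer matrix `H_Z = (H ⊗ 1_V | 1_C ⊗ Hᵗ)`. Rows are indexed by `C × V`. -/
def HZ (H : Matrix C V (ZMod 2)) : Matrix (C × V) ((V × V) ⊕ (C × C)) (ZMod 2) :=
  Matrix.fromCols (H ⊗ₖ (1 : Matrix V V (ZMod 2))) ((1 : Matrix C C (ZMod 2)) ⊗ₖ Hᵀ)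

theorem Matrix.one_kronecker_mul_kronecker_one {R l m n p : Type*} [CommSemiring R]
    [Fintype m] [Fintype n] [DecidableEq m] [DecidableEq n] (A : Matrix l n R) (B : Matrix m p R) :
    (1 : Matrix m m R) ⊗ₖ A * B ⊗ₖ (1 : Matrix n n R) = B ⊗ₖ A := by
  rw [← mul_kronecker_mul, Matrix.one_mul, Matrix.mul_one]

theorem Matrix.kronecker_one_mul_one_kronecker {R l m n p : Type*} [CommSemiring R]
    [Fintype m] [Fintype n] [DecidableEq m] [DecidableEq n] (A : Matrix l m R) (B : Matrix n p R) :
    A ⊗ₖ (1 : Matrix n n R) * (1 : Matrix m m R) ⊗ₖ B = A ⊗ₖ B := by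
  rw [← mul_kronecker_mul, Matrix.one_mul, Matrix.mul_one]

theorem hypergraphProduct_mul_transpose {R : Type*} [CommSemiring R] (H : Matrix C V R) :
    fromCols ((1 : Matrix V V R) ⊗ₖ H) (Hᵀ ⊗ₖ (1 : Matrix C C R)) *
        (fromCols (H ⊗ₖ (1 : Matrix V V R)) ((1 : Matrix C C R) ⊗ₖ Hᵀ))ᵀ =
      Hᵀ ⊗ₖ H + Hᵀ ⊗ₖ H := by
  rw [transpose_fromCols, fromCols_mul_fromRows, ← kroneckerMap_transpose,
    ← kroneckerMap_transpose, transpose_one, transpose_one, transpose_transpose,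
    one_kronecker_mul_kronecker_one, kronecker_one_mul_one_kronecker]

/-- The hypergraph product code is a CSS code: `H_X · H_Zᵗ = 0` over `F₂`. -/
theorem stmt_0 (H : Matrix C V (ZMod 2)) : HX H * (HZ H)ᵀ = 0 := by
  rw [HX, HZ, hypergraphProduct_mul_transpose]
  ext i j
  exact CharTwo.add_self_eq_zero _
end

section
/- (Embedded logical X operators are not stabilizers.) Let x ∈ F₂^V satisfy H·x = 0 and x ≠ 0, and let y ∈ F₂^V not lie in the row space of H. Then the vector (x ⊗ y | 0) ∈ F₂^((V × V) ⊕ (C × C)) (supported on the VV qubits) does not lie in the row space of H_X. Likewise, if x' ∈ F₂^C satisfies Hᵗ·x' = 0 and x' ≠ 0, and y' ∈ F₂^C does not lie in the row space of Hᵗ, then (0 | y' ⊗ x') does not lie in the row space of H_X. -/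
open Matrix Kronecker

variable {V C : Type*} [Fintype V] [Fintype C] [DecidableEq V] [DecidableEq C]

/-
A stabilizer `a ᵥ* H_X` restricted to the qubits `{v} × V` (resp. `C × {c}`) is
`a(v, ·) ᵥ* H` (resp. `a(·, c) ᵥ* Hᵀ`), so it lies in the row space of `H` (resp. `Hᵀ`).
If it equals `x ⊗ y` (resp. `y' ⊗ x'`), choosing `v` with `x v ≠ 0` (resp. `c` with `x' c ≠ 0`)
exhibits `y` (resp. `y'`) in that row space, up to the scalar `x v`.
-/

section Kronecker

variable {l m n R : Type*} [Fintype l] [Fintype m]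

theorem vecMul_one_kronecker_apply [NonAssocSemiring R] [DecidableEq l] (a : l × m → R)
    (B : Matrix m n R) (i : l) (j : n) :
    (a ᵥ* ((1 : Matrix l l R) ⊗ₖ B)) (i, j) = ((fun k => a (i, k)) ᵥ* B) j := by
  simp [vecMul, dotProduct, kroneckerMap_apply, Fintype.sum_prod_type, one_apply]

theorem vecMul_kronecker_one_apply [NonAssocSemiring R] [DecidableEq m] (a : l × m → R)
    (B : Matrix l n R) (i : n) (j : m) :
    (a ᵥ* (B ⊗ₖ (1 : Matrix m m R))) (i, j) = ((fun k => a (k, j)) ᵥ* B) i := by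
  simp [vecMul, dotProduct, kroneckerMap_apply, Fintype.sum_prod_type, one_apply]

variable {K : Type*} [Field K]

theorem exists_vecMul_eq_of_vecMul_one_kronecker_eq [DecidableEq l] (B : Matrix m n K)
    {a : l × m → K} {x : l → K} {y : n → K} (hx : x ≠ 0)
    (h : a ᵥ* ((1 : Matrix l l K) ⊗ₖ B) = fun p => x p.1 * y p.2) :
    ∃ b : m → K, b ᵥ* B = y := by
  obtain ⟨i, hi : x i ≠ 0⟩ := Function.ne_iff.mp hx
  refine ⟨(x i)⁻¹ • fun k => a (i, k), funext fun j => ?_⟩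
  rw [smul_vecMul, Pi.smul_apply, ← vecMul_one_kronecker_apply, h, smul_eq_mul,
    inv_mul_cancel_left₀ hi]

theorem exists_vecMul_eq_of_vecMul_kronecker_one_eq [DecidableEq m] (B : Matrix l n K)
    {a : l × m → K} {x : m → K} {y : n → K} (hx : x ≠ 0)
    (h : a ᵥ* (B ⊗ₖ (1 : Matrix m m K)) = fun p => y p.1 * x p.2) :
    ∃ b : l → K, b ᵥ* B = y := by
  obtain ⟨j, hj : x j ≠ 0⟩ := Function.ne_iff.mp hx
  refine ⟨(x j)⁻¹ • fun k => a (k, j), funext fun i => ?_⟩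
  rw [smul_vecMul, Pi.smul_apply, ← vecMul_kronecker_one_apply, h, smul_eq_mul]
  field_simp

end Kronecker

/-- Embedded logical X operators are not stabilizers. -/
theorem stmt_2 (H : Matrix C V (ZMod 2)) :
    (∀ x y : V → ZMod 2, H.mulVec x = 0 → x ≠ 0 →
      (¬ ∃ b : C → ZMod 2, Matrix.vecMul b H = y) →
      ¬ ∃ a : V × C → ZMod 2, Matrix.vecMul a (HX H) =
        Sum.elim (fun p : V × V => x p.1 * y p.2) (fun _ : C × C => 0)) ∧
    (∀ x' y' : C → ZMod 2, Hᵀ.mulVec x' = 0 → x' ≠ 0 →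
      (¬ ∃ b : V → ZMod 2, Matrix.vecMul b Hᵀ = y') →
      ¬ ∃ a : V × C → ZMod 2, Matrix.vecMul a (HX H) =
        Sum.elim (fun _ : V × V => 0) (fun p : C × C => y' p.1 * x' p.2)) := by
  constructor
  · rintro x y - hx hy ⟨a, ha⟩
    rw [HX, vecMul_fromCols, Sum.elim_eq_iff] at ha
    exact hy (exists_vecMul_eq_of_vecMul_one_kronecker_eq H hx ha.1)
  · rintro x' y' - hx' hy' ⟨a, ha⟩
    rw [HX, vecMul_fromCols, Sum.elim_eq_iff] at ha
    exact hy' (exists_vecMul_eq_of_vecMul_kronecker_one_eq Hᵀ hx' ha.2)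
end

section
/- (Embedded logical X operators span the X-logical space.) Every α ∈ F₂^((V × V) ⊕ (C × C)) satisfying α · H_Zᵗ = 0 lies in the span of: the rows of H_X, the vectors (x ⊗ y | 0) with x ∈ F₂^V satisfying H·x = 0 and y ∈ F₂^V arbitrary, and the vectors (0 | y' ⊗ x') with x' ∈ F₂^C satisfying Hᵗ·x' = 0 and y' ∈ F₂^C arbitrary. -/
open Matrix Kronecker

variable {V C : Type*} [Fintype V] [Fintype C] [DecidableEq V] [DecidableEq C]

/-!
Write `α = (vec Aᵀ | vec Bᵀ)`, i.e. read its two blocks as matrices `A : V × V` and `B : C × C`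
(`vec Aᵀ (i, j) = A i j`). The condition `α · H_Zᵗ = 0` says `H A = B H` over `F₂`. If `G` is a
generalized inverse of `H` (`H G H = H`, which exists over any field) and `M = A G`, then
`H M H = B H G H = B H = H A`, so `A = M H + P` and `B = H M + Q` with `H P = 0` and `Q H = 0`.
The part `(M H | H M)` is the combination of the rows of `H_X` with coefficients `M`, the columns
`x` of `P` give the vectors `(x ⊗ e_j | 0)`, and the rows `x'` of `Q` give `(0 | e_i ⊗ x')`.
-/

theorem LinearMap.exists_comp_comp_eq_self {K E F : Type*} [DivisionRing K] [AddCommGroup E]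
    [Module K E] [AddCommGroup F] [Module K F] (f : E →ₗ[K] F) :
    ∃ g : F →ₗ[K] E, f ∘ₗ g ∘ₗ f = f := by
  obtain ⟨s, hs⟩ := f.rangeRestrict.exists_rightInverse_of_surjective f.range_rangeRestrict
  obtain ⟨p, hp⟩ := (LinearMap.range f).subtype.exists_leftInverse_of_injective
    (LinearMap.range f).ker_subtype
  refine ⟨s ∘ₗ p, LinearMap.ext fun v => ?_⟩
  have hfs (w : LinearMap.range f) : f (s w) = w := congrArg Subtype.val (LinearMap.congr_fun hs w)
  have hpf : p (f v) = f.rangeRestrict v := LinearMap.congr_fun hp (f.rangeRestrict v)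
  simp [hpf, hfs]

theorem Matrix.exists_mul_mul_eq_self {m n K : Type*} [Fintype m] [Fintype n] [DecidableEq m]
    [DecidableEq n] [Field K] (H : Matrix m n K) : ∃ G : Matrix n m K, H * G * H = H := by
  obtain ⟨g, hg⟩ := (Matrix.toLin' H).exists_comp_comp_eq_self
  refine ⟨LinearMap.toMatrix' g, Matrix.toLin'.injective ?_⟩
  rw [Matrix.toLin'_mul, Matrix.toLin'_mul, Matrix.toLin'_toMatrix', LinearMap.comp_assoc, hg]

theorem Matrix.exists_decomposition_of_mul_eq_mul {m n K : Type*} [Fintype m] [Fintype n]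
    [DecidableEq m] [DecidableEq n] [Field K] {H : Matrix m n K} {A : Matrix n n K}
    {B : Matrix m m K} (hAB : H * A = B * H) :
    ∃ (M : Matrix n m K) (P : Matrix n n K) (Q : Matrix m m K),
      H * P = 0 ∧ Q * H = 0 ∧ A = M * H + P ∧ B = H * M + Q := by
  obtain ⟨G, hG⟩ := H.exists_mul_mul_eq_self
  have hHMH : H * (A * G) * H = H * A :=
    calc H * (A * G) * H = B * (H * G * H) := by simp only [← Matrix.mul_assoc, hAB]
      _ = H * A := by rw [hG, hAB]
  refine ⟨A * G, A - A * G * H, B - H * (A * G), ?_, ?_, by abel, by abel⟩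
  · rw [Matrix.mul_sub, ← Matrix.mul_assoc, ← Matrix.mul_assoc, sub_eq_zero, Matrix.mul_assoc H,
      hHMH]
  · rw [Matrix.sub_mul, hHMH, hAB, sub_self]

theorem sumElim_vec_transpose_zero_mem_span {k n m β R : Type*} [Fintype n] [Fintype m]
    [DecidableEq m] [CommSemiring R] {H : Matrix k n R} {P : Matrix n m R}
    (hP : H * P = 0) :
    Sum.elim (vec Pᵀ) (0 : β → R) ∈ Submodule.span R
      {w | ∃ (x : n → R) (y : m → R), H *ᵥ x = 0 ∧
        w = Sum.elim (fun p : n × m => x p.1 * y p.2) (fun _ : β => 0)} := by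
  have hsum : Sum.elim (vec Pᵀ) (0 : β → R) = ∑ j,
      Sum.elim (fun p : n × m => P.col j p.1 * (Pi.single j 1 : m → R) p.2) (fun _ : β => 0) := by
    ext (⟨i, j⟩ | b) <;> simp [Finset.sum_apply, Pi.single_apply]
  rw [hsum]
  refine Submodule.sum_mem _ fun j _ => Submodule.subset_span ⟨P.col j, Pi.single j 1, ?_, rfl⟩
  rw [← mulVec_single_one, mulVec_mulVec, hP, zero_mulVec]

theorem sumElim_zero_vec_transpose_mem_span {k n m β R : Type*} [Fintype k] [Fintype m]
    [DecidableEq k] [CommSemiring R] {H : Matrix m n R} {Q : Matrix k m R}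
    (hQ : Q * H = 0) :
    Sum.elim (0 : β → R) (vec Qᵀ) ∈ Submodule.span R
      {w | ∃ (x : m → R) (y : k → R), Hᵀ *ᵥ x = 0 ∧
        w = Sum.elim (fun _ : β => 0) (fun p : k × m => y p.1 * x p.2)} := by
  have hsum : Sum.elim (0 : β → R) (vec Qᵀ) = ∑ i,
      Sum.elim (fun _ : β => 0) (fun p : k × m => (Pi.single i 1 : k → R) p.1 * Q.row i p.2) := by
    ext (b | ⟨i, j⟩) <;> simp [Finset.sum_apply, Pi.single_apply]
  rw [hsum]
  refine Submodule.sum_mem _ fun i _ => Submodule.subset_span ⟨Q.row i, Pi.single i 1, ?_, rfl⟩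
  rw [mulVec_transpose, ← single_one_vecMul, vecMul_vecMul, hQ, vecMul_zero]

theorem HZ_mulVec_sumElim (H : Matrix C V (ZMod 2)) (A : Matrix V V (ZMod 2))
    (B : Matrix C C (ZMod 2)) :
    HZ H *ᵥ Sum.elim (vec Aᵀ) (vec Bᵀ) = vec (H * A + B * H)ᵀ := by
  rw [HZ, fromCols_mulVec_sumElim, kronecker_mulVec_vec, kronecker_mulVec_vec, transpose_add,
    vec_add, transpose_mul, transpose_mul, Matrix.one_mul, transpose_one, Matrix.mul_one]

theorem vecMul_HX (H : Matrix C V (ZMod 2)) (M : Matrix V C (ZMod 2)) :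
    vec Mᵀ ᵥ* HX H = Sum.elim (vec (M * H)ᵀ) (vec (H * M)ᵀ) := by
  rw [HX, vecMul_fromCols, vec_vecMul_kronecker, vec_vecMul_kronecker, transpose_mul,
    transpose_mul, transpose_one, Matrix.one_mul, Matrix.mul_one]

/-- Embedded logical X operators span the X-logical space: every `α` with
`α · H_Zᵗ = 0` lies in the span of the rows of `H_X`, the vectors `(x ⊗ y | 0)` with
`H·x = 0`, and the vectors `(0 | y' ⊗ x')` with `Hᵗ·x' = 0`. -/
theorem stmt_3 (H : Matrix C V (ZMod 2)) (α : (V × V) ⊕ (C × C) → ZMod 2)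
    (hα : Matrix.vecMul α (HZ H)ᵀ = 0) :
    α ∈ Submodule.span (ZMod 2)
      (Set.range (HX H) ∪
       {w : (V × V) ⊕ (C × C) → ZMod 2 | ∃ x y : V → ZMod 2, H.mulVec x = 0 ∧
          w = Sum.elim (fun p : V × V => x p.1 * y p.2) (fun _ : C × C => 0)} ∪
       {w : (V × V) ⊕ (C × C) → ZMod 2 | ∃ x' y' : C → ZMod 2, Hᵀ.mulVec x' = 0 ∧
          w = Sum.elim (fun _ : V × V => 0) (fun p : C × C => y' p.1 * x' p.2)}) := by
  obtain ⟨A, B, rfl⟩ : ∃ (A : Matrix V V (ZMod 2)) (B : Matrix C C (ZMod 2)),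
      α = Sum.elim (vec Aᵀ) (vec Bᵀ) :=
    ⟨of fun i j => α (.inl (i, j)), of fun i j => α (.inr (i, j)), by ext (_ | _) <;> rfl⟩
  rw [vecMul_transpose, HZ_mulVec_sumElim, ← vec_zero, vec_inj, transpose_eq_zero,
    ← ZModModule.sub_eq_add, sub_eq_zero] at hα
  obtain ⟨M, P, Q, hP, hQ, rfl, rfl⟩ := exists_decomposition_of_mul_eq_mul hα
  have hsplit : Sum.elim (vec (M * H + P)ᵀ) (vec (H * M + Q)ᵀ) =
      vec Mᵀ ᵥ* HX H + Sum.elim (vec Pᵀ) 0 + Sum.elim (0 : V × V → ZMod 2) (vec Qᵀ) := by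
    rw [vecMul_HX]; ext (_ | _) <;> simp
  rw [hsplit]
  refine add_mem (add_mem ?_ ?_) ?_
  · exact Submodule.span_mono (Set.subset_union_left.trans Set.subset_union_left)
      ((Submodule.mem_span_range_iff_exists_fun _).2 ⟨_, (vecMul_eq_sum _ _).symm⟩)
  · exact Submodule.span_mono (Set.subset_union_right.trans Set.subset_union_left)
      (sumElim_vec_transpose_zero_mem_span hP)
  · exact Submodule.span_mono Set.subset_union_right (sumElim_zero_vec_transpose_mem_span hQ)
end

section
/- (Dimension of the hypergraph product code.) Let n = |V|, m = |C|, k = dim(ker H) (right kernel of H over F₂) and k̃ = dim(ker Hᵗ). Then (n² + m²) − rank(H_X) − rank(H_Z) = k² + k̃²; that is, the hypergraph product code encodes k² + k̃² logical qubits. -/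
/-!
Let `r = rank H`. The column space of `H_X` is the sum of the ranges of `1 ⊗ H` and `Hᵀ ⊗ 1`,
of dimensions `n r` and `r m`, and their intersection is the range of `Hᵀ ⊗ H`, of dimension `r²`;
hence `rank H_X = n r + r m - r²`. `H_Z` is `H_X` with rows and columns permuted, so it has the
same rank, and with `n = r + k`, `m = r + k̃` the count `n² + m² - 2 rank H_X` is `k² + k̃²`.
-/

open Matrix Kronecker

variable {V C : Type*} [Fintype V] [Fintype C] [DecidableEq V] [DecidableEq C]

open Module

theorem TensorProduct.finrank_range_map {K M N P Q : Type*} [Field K]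
    [AddCommGroup M] [AddCommGroup N] [AddCommGroup P] [AddCommGroup Q]
    [Module K M] [Module K N] [Module K P] [Module K Q]
    (f : M →ₗ[K] P) (g : N →ₗ[K] Q) :
    finrank K (LinearMap.range (TensorProduct.map f g)) =
      finrank K (LinearMap.range f) * finrank K (LinearMap.range g) := by
  have hfactor : TensorProduct.map f g =
      TensorProduct.mapIncl (LinearMap.range f) (LinearMap.range g)
        ∘ₗ TensorProduct.map f.rangeRestrict g.rangeRestrict := by
    rw [TensorProduct.mapIncl, ← TensorProduct.map_comp]; rfl
  rw [hfactor, LinearMap.range_comp_of_range_eq_top _ (LinearMap.range_eq_top.2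
      (TensorProduct.map_surjective f.surjective_rangeRestrict g.surjective_rangeRestrict)),
    LinearMap.finrank_range_of_inj (Module.Flat.tensorProduct_mapIncl_injective_of_right _ _),
    Module.finrank_tensorProduct]

namespace Matrix

variable {K : Type*} [Field K] {m n p q : Type*}

theorem rank_kronecker [Fintype m] [Fintype n] [Fintype p] [Fintype q] [DecidableEq n]
    [DecidableEq q] (A : Matrix m n K) (B : Matrix p q K) :
    (A ⊗ₖ B).rank = A.rank * B.rank := by
  rw [rank_eq_finrank_range_toLin (A ⊗ₖ B) ((Pi.basisFun K m).tensorProduct (Pi.basisFun K p))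
      ((Pi.basisFun K n).tensorProduct (Pi.basisFun K q)), toLin_kronecker,
    TensorProduct.finrank_range_map, ← rank_eq_finrank_range_toLin, ← rank_eq_finrank_range_toLin]

theorem range_mulVecLin_fromCols [Fintype n] [Fintype p] (A : Matrix m n K) (B : Matrix m p K) :
    LinearMap.range (fromCols A B).mulVecLin
      = LinearMap.range A.mulVecLin ⊔ LinearMap.range B.mulVecLin := by
  ext x
  simp only [LinearMap.mem_range, Submodule.mem_sup, mulVecLin_apply]
  constructor
  · rintro ⟨u, rfl⟩
    refine ⟨A *ᵥ (u ∘ Sum.inl), ⟨_, rfl⟩, B *ᵥ (u ∘ Sum.inr), ⟨_, rfl⟩, ?_⟩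
    rw [← fromCols_mulVec_sumElim, Sum.elim_comp_inl_inr]
  · rintro ⟨_, ⟨u, rfl⟩, _, ⟨v, rfl⟩, rfl⟩
    exact ⟨Sum.elim u v, fromCols_mulVec_sumElim A B u v⟩

theorem exists_mul_mul_eq_self_s4 [Fintype m] [Fintype n] [DecidableEq m] [DecidableEq n]
    (A : Matrix m n K) :
    ∃ G : Matrix n m K, A * G * A = A := by
  obtain ⟨g₀, hg₀⟩ := A.mulVecLin.rangeRestrict.exists_rightInverse_of_surjective
    (LinearMap.range_eq_top.2 A.mulVecLin.surjective_rangeRestrict)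
  obtain ⟨g, hg⟩ := LinearMap.exists_extend g₀
  refine ⟨LinearMap.toMatrix' g, toLin'.injective (LinearMap.ext fun x => ?_)⟩
  have hg_apply : g (A *ᵥ x) = g₀ ⟨A *ᵥ x, x, rfl⟩ := LinearMap.congr_fun hg ⟨A *ᵥ x, x, rfl⟩
  have hg₀_apply : A *ᵥ g₀ ⟨A *ᵥ x, x, rfl⟩ = A *ᵥ x :=
    congrArg Subtype.val (LinearMap.congr_fun hg₀ ⟨A *ᵥ x, x, rfl⟩)
  simp only [toLin'_apply, ← mulVec_mulVec, LinearMap.toMatrix'_mulVec, hg_apply, hg₀_apply]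

theorem range_mulVecLin_one_kronecker_inf [Fintype m] [Fintype n] [Fintype p] [Fintype q]
    [DecidableEq m] [DecidableEq n] [DecidableEq p] [DecidableEq q]
    (A : Matrix m n K) (B : Matrix p q K) :
    LinearMap.range ((1 : Matrix m m K) ⊗ₖ B).mulVecLin
        ⊓ LinearMap.range (A ⊗ₖ (1 : Matrix p p K)).mulVecLin
      = LinearMap.range (A ⊗ₖ B).mulVecLin := by
  apply le_antisymm
  · rintro x ⟨⟨u, rfl⟩, ⟨w, hw⟩⟩
    obtain ⟨G, hG⟩ := B.exists_mul_mul_eq_self_s4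
    refine ⟨((1 : Matrix n n K) ⊗ₖ G) *ᵥ w, ?_⟩
    simp only [mulVecLin_apply] at hw ⊢
    -- As `B G B = B`, `1 ⊗ BG` fixes the range of `1 ⊗ B` and maps that of `A ⊗ 1` into
    -- that of `A ⊗ B`.
    calc (A ⊗ₖ B) *ᵥ (((1 : Matrix n n K) ⊗ₖ G) *ᵥ w)
        = ((1 : Matrix m m K) ⊗ₖ (B * G)) *ᵥ ((A ⊗ₖ (1 : Matrix p p K)) *ᵥ w) := by
          simp only [mulVec_mulVec, ← mul_kronecker_mul, Matrix.one_mul, Matrix.mul_one]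
      _ = ((1 : Matrix m m K) ⊗ₖ B) *ᵥ u := by
          rw [hw, mulVec_mulVec, ← mul_kronecker_mul, Matrix.one_mul, hG]
  · have hB : A ⊗ₖ B = ((1 : Matrix m m K) ⊗ₖ B) * (A ⊗ₖ (1 : Matrix q q K)) := by
      rw [← mul_kronecker_mul, Matrix.one_mul, Matrix.mul_one]
    have hA : A ⊗ₖ B = (A ⊗ₖ (1 : Matrix p p K)) * ((1 : Matrix n n K) ⊗ₖ B) := by
      rw [← mul_kronecker_mul, Matrix.one_mul, Matrix.mul_one]
    refine le_inf ?_ ?_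
    · rw [hB, mulVecLin_mul]
      exact LinearMap.range_comp_le_range _ _
    · rw [hA, mulVecLin_mul]
      exact LinearMap.range_comp_le_range _ _

theorem rank_fromCols_one_kronecker [Fintype m] [Fintype n] [Fintype p] [Fintype q]
    [DecidableEq m] [DecidableEq n] [DecidableEq p] [DecidableEq q]
    (A : Matrix m n K) (B : Matrix p q K) :
    (fromCols ((1 : Matrix m m K) ⊗ₖ B) (A ⊗ₖ (1 : Matrix p p K))).rank + A.rank * B.rank
      = Fintype.card m * B.rank + A.rank * Fintype.card p := by
  have h := Submodule.finrank_sup_add_finrank_inf_eq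
    (LinearMap.range ((1 : Matrix m m K) ⊗ₖ B).mulVecLin)
    (LinearMap.range (A ⊗ₖ (1 : Matrix p p K)).mulVecLin)
  rw [← range_mulVecLin_fromCols, range_mulVecLin_one_kronecker_inf] at h
  rwa [← rank, ← rank, ← rank, ← rank, rank_kronecker, rank_kronecker, rank_kronecker, rank_one,
    rank_one] at h

theorem rank_add_finrank_ker [Fintype n] (A : Matrix m n K) :
    A.rank + finrank K (LinearMap.ker A.mulVecLin) = Fintype.card n := by
  rw [rank, LinearMap.finrank_range_add_finrank_ker, finrank_fintype_fun_eq_card]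

end Matrix

theorem rank_HX_add_rank_mul_rank (H : Matrix C V (ZMod 2)) :
    (HX H).rank + H.rank * H.rank = Fintype.card V * H.rank + H.rank * Fintype.card C := by
  simpa only [HX, rank_transpose] using rank_fromCols_one_kronecker Hᵀ H

theorem rank_HZ_eq_rank_HX (H : Matrix C V (ZMod 2)) : (HZ H).rank = (HX H).rank := by
  have hswap : HZ H = (HX H).submatrix (Equiv.prodComm C V)
      (Equiv.sumCongr (Equiv.prodComm V V) (Equiv.prodComm C C)) := by
    ext ⟨c, v⟩ (⟨v₁, v₂⟩ | ⟨c₁, c₂⟩) <;> simp [HX, HZ, mul_comm]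
  rw [hswap, rank_submatrix]

/-- Dimension of the hypergraph product code:
`(n² + m²) − rank H_X − rank H_Z = k² + k̃²`. -/
theorem stmt_4 (H : Matrix C V (ZMod 2)) :
    Fintype.card V ^ 2 + Fintype.card C ^ 2 - (HX H).rank - (HZ H).rank =
      Module.finrank (ZMod 2) (LinearMap.ker H.mulVecLin) ^ 2 +
      Module.finrank (ZMod 2) (LinearMap.ker Hᵀ.mulVecLin) ^ 2 := by
  have hX := rank_HX_add_rank_mul_rank H
  have hV := H.rank_add_finrank_ker
  have hC := Hᵀ.rank_add_finrank_ker
  rw [rank_transpose] at hC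
  have hcount : Fintype.card V ^ 2 + Fintype.card C ^ 2 = (HX H).rank + (HZ H).rank +
      (finrank (ZMod 2) (LinearMap.ker H.mulVecLin) ^ 2 +
        finrank (ZMod 2) (LinearMap.ker Hᵀ.mulVecLin) ^ 2) := by
    rw [rank_HZ_eq_rank_HX, ← hV, ← hC]
    rw [← hV, ← hC] at hX
    nlinarith
  omega
end

section
/- The original X-stabilizers commute with the Z-stabilizers of a smooth puncture: H_X · (H_Z')ᵗ = 0 over F₂. -/
open Matrix Kronecker

variable {V C : Type*} [Fintype V] [Fintype C] [DecidableEq V] [DecidableEq C]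

/-- Diagonal 0–1 projector matrix `1_P` onto a subset `P`. -/
def projM {α : Type*} [Fintype α] [DecidableEq α] (P : Finset α) : Matrix α α (ZMod 2) :=
  Matrix.diagonal fun a => if a ∈ P then 1 else 0

/-- Neighborhood `N = {c ∈ C : ∃ v ∈ S, H c v = 1}` of a set `S` of variable nodes. -/
def Nbhd (H : Matrix C V (ZMod 2)) (S : Finset V) : Finset C :=
  @Finset.filter _ (fun c => ∃ v ∈ S, H c v = 1) (fun _ => inferInstance) Finset.univ

/-- Ancestor `A = {c ∈ C : ∀ v, H c v = 1 → v ∈ S}` of a set `S` of variable nodes. -/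
def Anc (H : Matrix C V (ZMod 2)) (S : Finset V) : Finset C :=
  @Finset.filter _ (fun c => ∀ v, H c v = 1 → v ∈ S) (fun _ => inferInstance) Finset.univ

/-- Neighborhood `M = {v ∈ V : ∃ c ∈ T, H c v = 1}` of a set `T` of check nodes. -/
def NbhdT (H : Matrix C V (ZMod 2)) (T : Finset C) : Finset V :=
  Finset.univ.filter fun v => ∃ c ∈ T, H c v = 1

/-- Ancestor `B = {v ∈ V : ∀ c, H c v = 1 → c ∈ T}` of a set `T` of check nodes. -/
def AncT (H : Matrix C V (ZMod 2)) (T : Finset C) : Finset V :=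
  Finset.univ.filter fun v => ∀ c, H c v = 1 → c ∈ T

/-- Smooth-puncture X matrix `H_X' = (1_B ⊗ H_S | H_Tᵗ ⊗ 1_A)`,
where `H_S = H·1_S` and `H_T = 1_T·H`. -/
def HX' (H : Matrix C V (ZMod 2)) (S : Finset V) (T : Finset C) :
    Matrix (V × C) ((V × V) ⊕ (C × C)) (ZMod 2) :=
  Matrix.fromCols (projM (AncT H T) ⊗ₖ (H * projM S)) ((projM T * H)ᵀ ⊗ₖ projM (Anc H S))

/-- Smooth-puncture Z matrix `H_Z' = (H_T ⊗ 1_S | 1_T ⊗ H_Sᵗ)`. -/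
def HZ' (H : Matrix C V (ZMod 2)) (S : Finset V) (T : Finset C) :
    Matrix (C × V) ((V × V) ⊕ (C × C)) (ZMod 2) :=
  Matrix.fromCols ((projM T * H) ⊗ₖ projM S) (projM T ⊗ₖ (H * projM S)ᵀ)

theorem Matrix.fromCols_kronecker_mul_transpose_fromCols_kronecker
    {R ι₁ ι₂ κ₁ κ₂ μ₁ μ₂ ν₁ ν₂ : Type*} [CommSemiring R]
    [Fintype μ₁] [Fintype μ₂] [Fintype ν₁] [Fintype ν₂]
    (A₁ : Matrix ι₁ μ₁ R) (B₁ : Matrix ι₂ ν₁ R) (A₂ : Matrix ι₁ μ₂ R) (B₂ : Matrix ι₂ ν₂ R)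
    (C₁ : Matrix κ₁ μ₁ R) (D₁ : Matrix κ₂ ν₁ R) (C₂ : Matrix κ₁ μ₂ R) (D₂ : Matrix κ₂ ν₂ R) :
    fromCols (A₁ ⊗ₖ B₁) (A₂ ⊗ₖ B₂) * (fromCols (C₁ ⊗ₖ D₁) (C₂ ⊗ₖ D₂))ᵀ =
      (A₁ * C₁ᵀ) ⊗ₖ (B₁ * D₁ᵀ) + (A₂ * C₂ᵀ) ⊗ₖ (B₂ * D₂ᵀ) := by
  rw [transpose_fromCols, fromCols_mul_fromRows, ← kroneckerMap_transpose,
    ← kroneckerMap_transpose, ← mul_kronecker_mul, ← mul_kronecker_mul]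

theorem projM_transpose {α : Type*} [Fintype α] [DecidableEq α] (P : Finset α) :
    (projM P)ᵀ = projM P :=
  diagonal_transpose _

/-- The original X-stabilizers commute with the Z-stabilizers of a smooth puncture:
`H_X · (H_Z')ᵗ = 0` over `F₂`. -/
theorem stmt_6 (H : Matrix C V (ZMod 2)) (S : Finset V) (T : Finset C) :
    HX H * (HZ' H S T)ᵀ = 0 := by
  rw [HX, HZ', fromCols_kronecker_mul_transpose_fromCols_kronecker]
  -- both blocks contribute `H_Tᵗ ⊗ H_S`, which cancels in characteristic 2
  simp only [transpose_mul, projM_transpose, transpose_transpose, Matrix.one_mul]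
  ext i j
  exact CharTwo.add_self_eq_zero _
end

section
/- (Correctability implications, part 2.) If ∀ x ∈ F₂^V, 1_T·H·x = 0 → x = 0, then ∀ x ∈ F₂^V, H·1_B·x = 0 → 1_B·x = 0. If ∀ y ∈ F₂^C, 1_S·Hᵗ·y = 0 → y = 0, then ∀ y ∈ F₂^C, Hᵗ·1_A·y = 0 → 1_A·y = 0. -/
open Matrix Kronecker

variable {V C : Type*} [Fintype V] [Fintype C] [DecidableEq V] [DecidableEq C]

theorem Matrix.eq_zero_of_mulVec_eq_zero_of_mul {m n k R : Type*} [Fintype n] [Fintype k]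
    [NonUnitalSemiring R] {P : Matrix m n R} {H : Matrix n k R}
    (hPH : ∀ x, (P * H) *ᵥ x = 0 → x = 0) {x : k → R} (hx : H *ᵥ x = 0) : x = 0 :=
  hPH x (by rw [← mulVec_mulVec, hx, mulVec_zero])

/-- Correctability implications, part 2: if `1_T·H` has trivial kernel then no nonzero
codeword of `H` is supported on `B`; likewise for `1_S·Hᵗ` and `A`. -/
theorem stmt_10 (H : Matrix C V (ZMod 2)) (S : Finset V) (T : Finset C) :
    ((∀ x : V → ZMod 2, (projM T * H).mulVec x = 0 → x = 0) →
      ∀ x : V → ZMod 2, (H * projM (AncT H T)).mulVec x = 0 → (projM (AncT H T)).mulVec x = 0) ∧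
    ((∀ y : C → ZMod 2, (projM S * Hᵀ).mulVec y = 0 → y = 0) →
      ∀ y : C → ZMod 2, (Hᵀ * projM (Anc H S)).mulVec y = 0 → (projM (Anc H S)).mulVec y = 0) :=
  ⟨fun hT _ hx => eq_zero_of_mulVec_eq_zero_of_mul hT ((mulVec_mulVec _ _ _).trans hx),
    fun hS _ hy => eq_zero_of_mulVec_eq_zero_of_mul hS ((mulVec_mulVec _ _ _).trans hy)⟩
end

section
/- (Characterization of interior-avoiding products of punctured Z-stabilizers.) Let a ∈ F₂^(C × V) with a(c, v) = 0 unless c ∈ T and v ∈ S. Then the vector a·H_Z' ∈ F₂^((V × V) ⊕ (C × C)) vanishes on every interior coordinate (i.e. on (B × S) ∪ (T × A)) if and only if a lies in the span of pure tensors g ⊗ f, where g ∈ F₂^C is supported on T and satisfies 1_B·Hᵗ·g = 0, and f ∈ F₂^V is supported on S and satisfies 1_A·H·f = 0. -/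
/-!
Read `a` as a `C × V` matrix supported on `T × S`. The interior conditions on `a·H_Z'` say
exactly that every column of `a` lies in `K_T = {g supported on T, 1_B·Hᵗ·g = 0}` and every
row in `K_S = {f supported on S, 1_A·H·f = 0}`. Over a field, the matrices whose columns lie in
a subspace `U` and whose rows lie in a subspace `W` form the span of the `g ⊗ f` with `g ∈ U`,
`f ∈ W`: expanding each row in a basis `(f_i)` of `W`, the coefficient vector `g_i` is a linear
functional (a coordinate of a projection onto `W`) applied to the rows, hence a linear
combination of the columns, hence in `U`.
-/

open Matrix Kronecker

variable {V C : Type*} [Fintype V] [Fintype C] [DecidableEq V] [DecidableEq C]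

def outerProducts {K m n : Type*} [CommSemiring K] (U : Submodule K (m → K))
    (W : Submodule K (n → K)) : Set (m × n → K) :=
  {w | ∃ g ∈ U, ∃ f ∈ W, w = fun p => g p.1 * f p.2}

section OuterProducts

variable {K m n : Type*} [Field K]

theorem mem_span_outerProducts_of_forall_mem [Fintype n]
    {U : Submodule K (m → K)} {W : Submodule K (n → K)} {a : m × n → K}
    (hcol : ∀ v, (fun c => a (c, v)) ∈ U) (hrow : ∀ c, (fun v => a (c, v)) ∈ W) :
    a ∈ Submodule.span K (outerProducts U W) := by
  classical
  obtain ⟨π, hπ⟩ := LinearMap.exists_leftInverse_of_injective W.subtype W.ker_subtype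
  let b := Module.finBasis K W
  let φ : Fin (Module.finrank K W) → (n → K) →ₗ[K] K := fun i => (b.coord i).comp π
  let g : Fin (Module.finrank K W) → m → K := fun i c => φ i (fun v => a (c, v))
  have hg : ∀ i, g i ∈ U := by
    intro i
    have : g i = ∑ v, φ i (fun j => if v = j then 1 else 0) • fun c => a (c, v) := by
      funext c
      simp only [g, Finset.sum_apply, Pi.smul_apply, smul_eq_mul]
      rw [(φ i).pi_apply_eq_sum_univ]
      exact Finset.sum_congr rfl fun v _ => mul_comm _ _
    rw [this]
    exact Submodule.sum_mem _ fun v _ => Submodule.smul_mem _ _ (hcol v)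
  have hrepr : ∀ c i, g i c = b.repr ⟨_, hrow c⟩ i := fun c i =>
    congrArg (b.coord i) (LinearMap.congr_fun hπ ⟨_, hrow c⟩)
  have ha : a = ∑ i, fun p : m × n => g i p.1 * (b i : n → K) p.2 := by
    funext ⟨c, v⟩
    have := congrArg (fun x : W => (x : n → K) v) (b.sum_repr ⟨_, hrow c⟩)
    simp only [Submodule.coe_sum, Submodule.coe_smul, Finset.sum_apply, Pi.smul_apply,
      smul_eq_mul] at this
    simpa only [Finset.sum_apply, hrepr] using this.symm
  rw [ha]
  exact Submodule.sum_mem _ fun i _ => Submodule.subset_span ⟨g i, hg i, b i, (b i).2, rfl⟩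

theorem mem_span_outerProducts_iff [Fintype n]
    {U : Submodule K (m → K)} {W : Submodule K (n → K)} {a : m × n → K} :
    a ∈ Submodule.span K (outerProducts U W) ↔
      (∀ v, (fun c => a (c, v)) ∈ U) ∧ ∀ c, (fun v => a (c, v)) ∈ W := by
  refine ⟨fun ha => ?_, fun h => mem_span_outerProducts_of_forall_mem h.1 h.2⟩
  let L : Submodule K (m × n → K) :=
    (⨅ v, U.comap (LinearMap.funLeft K K (·, v))) ⊓
      ⨅ c, W.comap (LinearMap.funLeft K K (c, ·))
  have hL : ∀ x, x ∈ L ↔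
      (∀ v, (fun c => x (c, v)) ∈ U) ∧ ∀ c, (fun v => x (c, v)) ∈ W := by
    intro x
    simp only [L, Submodule.mem_inf, Submodule.mem_iInf, Submodule.mem_comap]
    rfl
  suffices Submodule.span K (outerProducts U W) ≤ L from (hL a).1 (this ha)
  rw [Submodule.span_le]
  rintro _ ⟨g, hg, f, hf, rfl⟩
  refine (hL _).2 ⟨fun v => ?_, fun c => W.smul_mem (g c) hf⟩
  convert U.smul_mem (f v) hg using 1
  exact funext fun c => mul_comm _ _

end OuterProducts

def supportedKer {K α β : Type*} [CommSemiring K] [Fintype α] (M : Matrix β α K)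
    (P : Finset α) :
    Submodule K (α → K) :=
  Submodule.pi (↑P)ᶜ (fun _ => ⊥) ⊓ LinearMap.ker M.mulVecLin

theorem mem_supportedKer {K α β : Type*} [CommSemiring K] [Fintype α] {M : Matrix β α K}
    {P : Finset α} {x : α → K} :
    x ∈ supportedKer M P ↔ (∀ i ∉ P, x i = 0) ∧ M *ᵥ x = 0 := by
  simp [supportedKer, Submodule.mem_pi]

theorem outerProducts_supportedKer {K α β γ δ : Type*} [CommSemiring K] [Fintype α]
    [Fintype β] (M : Matrix γ α K) (P : Finset α) (N : Matrix δ β K) (Q : Finset β) :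
    outerProducts (supportedKer M P) (supportedKer N Q) =
      {w | ∃ g : α → K, ∃ f : β → K, (∀ i ∉ P, g i = 0) ∧ M *ᵥ g = 0 ∧
        (∀ j ∉ Q, f j = 0) ∧ N *ᵥ f = 0 ∧ w = fun p => g p.1 * f p.2} := by
  ext w
  simp only [outerProducts, mem_supportedKer, Set.mem_ofPred_eq, and_assoc, exists_and_left]

theorem projM_mul_mulVec_eq_zero_iff {α β : Type*} [Fintype α] [DecidableEq α] [Fintype β]
    (P : Finset α) (M : Matrix α β (ZMod 2)) (x : β → ZMod 2) :
    (projM P * M) *ᵥ x = 0 ↔ ∀ i ∈ P, (M *ᵥ x) i = 0 := by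
  rw [← mulVec_mulVec, projM, funext_iff]
  simp [mulVec_diagonal]

section Puncture

variable {H : Matrix C V (ZMod 2)} {S : Finset V} {T : Finset C} {a : C × V → ZMod 2}

theorem vecMul_HZ'_inl (ha : ∀ c v, ¬(c ∈ T ∧ v ∈ S) → a (c, v) = 0) (u v : V) :
    vecMul a (HZ' H S T) (Sum.inl (u, v)) = (Hᵀ *ᵥ fun c => a (c, v)) u := by
  simp only [vecMul, dotProduct, HZ', projM, transpose_mul, diagonal_transpose, fromCols_apply_inl,
    kroneckerMap_apply, diagonal_mul, ite_mul, one_mul, zero_mul, diagonal_apply, mul_ite, mul_one,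
    mul_zero, Fintype.sum_prod_type, Finset.sum_ite_eq', Finset.mem_univ, ↓reduceIte,
    Finset.sum_ite_irrel, Finset.sum_ite_mem, Finset.univ_inter, Finset.sum_const_zero, mulVec,
    transpose_apply]
  split_ifs with hv
  · refine Finset.sum_subset (Finset.subset_univ T) (fun c _ hc => ?_) |>.trans ?_
    · simp [ha c v (by tauto)]
    · simp only [mul_comm]
  · exact (Finset.sum_eq_zero fun c _ => by simp [ha c v (by tauto)]).symm

theorem vecMul_HZ'_inr (ha : ∀ c v, ¬(c ∈ T ∧ v ∈ S) → a (c, v) = 0) (c c' : C) :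
    vecMul a (HZ' H S T) (Sum.inr (c, c')) = (H *ᵥ fun v => a (c, v)) c' := by
  simp only [vecMul, dotProduct, HZ', projM, transpose_mul, diagonal_transpose, fromCols_apply_inr,
    kroneckerMap_apply, diagonal_apply, diagonal_mul, transpose_apply, ite_mul, one_mul, zero_mul,
    mul_ite, mul_zero, Fintype.sum_prod_type, Finset.sum_ite_mem, Finset.univ_inter,
    Finset.sum_ite_irrel, Finset.sum_const_zero, Finset.sum_ite_eq', Finset.mem_univ, ↓reduceIte, mulVec]
  split_ifs with hc
  · refine Finset.sum_subset (Finset.subset_univ S) (fun v _ hv => ?_) |>.trans ?_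
    · simp [ha c v (by tauto)]
    · simp only [mul_comm]
  · exact (Finset.sum_eq_zero fun v _ => by simp [ha c v (by tauto)]).symm

theorem forall_vecMul_HZ'_inl_eq_zero_iff (ha : ∀ c v, ¬(c ∈ T ∧ v ∈ S) → a (c, v) = 0) :
    (∀ u v, u ∈ AncT H T → v ∈ S → vecMul a (HZ' H S T) (Sum.inl (u, v)) = 0) ↔
      ∀ v, (fun c => a (c, v)) ∈ supportedKer (projM (AncT H T) * Hᵀ) T := by
  simp only [mem_supportedKer, projM_mul_mulVec_eq_zero_iff, vecMul_HZ'_inl ha]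
  refine ⟨fun h v => ⟨fun c hc => ha c v (by tauto), fun u hu => ?_⟩,
    fun h u v hu _ => (h v).2 u hu⟩
  by_cases hv : v ∈ S
  · exact h u v hu hv
  · simp [show (fun c => a (c, v)) = 0 from funext fun c => ha c v (by tauto)]

theorem forall_vecMul_HZ'_inr_eq_zero_iff (ha : ∀ c v, ¬(c ∈ T ∧ v ∈ S) → a (c, v) = 0) :
    (∀ c c', c ∈ T → c' ∈ Anc H S → vecMul a (HZ' H S T) (Sum.inr (c, c')) = 0) ↔
      ∀ c, (fun v => a (c, v)) ∈ supportedKer (projM (Anc H S) * H) S := by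
  simp only [mem_supportedKer, projM_mul_mulVec_eq_zero_iff, vecMul_HZ'_inr ha]
  refine ⟨fun h c => ⟨fun v hv => ha c v (by tauto), fun c' hc' => ?_⟩,
    fun h c c' _ hc' => (h c).2 c' hc'⟩
  by_cases hc : c ∈ T
  · exact h c c' hc hc'
  · simp [show (fun v => a (c, v)) = 0 from funext fun v => ha c v (by tauto)]

end Puncture

/-- Characterization of interior-avoiding products of punctured Z-stabilizers:
for `a` supported on `T × S`, the vector `a·H_Z'` vanishes on the interior
`(B × S) ∪ (T × A)` iff `a` lies in the span of pure tensors `g ⊗ f` with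
`g` supported on `T`, `1_B·Hᵗ·g = 0`, `f` supported on `S`, `1_A·H·f = 0`. -/
theorem stmt_14 (H : Matrix C V (ZMod 2)) (S : Finset V) (T : Finset C)
    (a : C × V → ZMod 2) (ha : ∀ c v, ¬(c ∈ T ∧ v ∈ S) → a (c, v) = 0) :
    ((∀ u v, u ∈ AncT H T → v ∈ S →
        Matrix.vecMul a (HZ' H S T) (Sum.inl (u, v)) = 0) ∧
     (∀ c c', c ∈ T → c' ∈ Anc H S →
        Matrix.vecMul a (HZ' H S T) (Sum.inr (c, c')) = 0)) ↔
    a ∈ Submodule.span (ZMod 2)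
      {w : C × V → ZMod 2 | ∃ g : C → ZMod 2, ∃ f : V → ZMod 2,
        (∀ c ∉ T, g c = 0) ∧ (projM (AncT H T) * Hᵀ).mulVec g = 0 ∧
        (∀ v ∉ S, f v = 0) ∧ (projM (Anc H S) * H).mulVec f = 0 ∧
        w = fun p : C × V => g p.1 * f p.2} := by
  rw [← outerProducts_supportedKer, mem_span_outerProducts_iff,
    forall_vecMul_HZ'_inl_eq_zero_iff ha, forall_vecMul_HZ'_inr_eq_zero_iff ha]
end
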